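/- arXiv:2504.00323 — 6 statements merged into one kernel-verified Lean document; each statement's English description precedes it below -/
import Mathlib

section
/- For integers j ≥ 2 and real parameters w_0, w_1 with 1 + T_k(w_0) ≠ 0 for all relevant k, the polynomials R̃_j(x) = 1 + b_j(T_j(w_0 + w_1 x) − T_j(w_0)), with b_j = 1/(1 + T_j(w_0)), satisfy the recurrence R̃_j(x) = 1 + μ_j(R̃_{j−1}(x) − 1) + ν_j(R̃_{j−2}(x) − 1) + μ̃_j x (R̃_{j−1}(x) − b_{j−1}), where μ_j = 2 w_0 b_j / b_{j−1}, ν_j = −b_j / b_{j−2}, μ̃_j = 2 w_1 b_j / b_{j−1}. -/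
open Real

/-- Chebyshev polynomial of the first kind, as a real function. -/
noncomputable def chebT : ℕ → ℝ → ℝ
  | 0, _ => 1
  | 1, x => x
  | (n+2), x => 2 * x * chebT (n+1) x - chebT n x

theorem stmt4 (w0 w1 : ℝ) (hb : ∀ k : ℕ, 1 + chebT k w0 ≠ 0) (j : ℕ) (hj : 2 ≤ j) :
    let b : ℕ → ℝ := fun k => 1 / (1 + chebT k w0)
    let Rt : ℕ → ℝ → ℝ := fun k x => 1 + b k * (chebT k (w0 + w1 * x) - chebT k w0)
    let μ : ℝ := 2 * w0 * b j / b (j-1)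
    let ν : ℝ := -(b j / b (j-2))
    let μt : ℝ := 2 * w1 * b j / b (j-1)
    ∀ x : ℝ, Rt j x = 1 + μ * (Rt (j-1) x - 1) + ν * (Rt (j-2) x - 1)
      + μt * x * (Rt (j-1) x - b (j-1)) := by
  obtain ⟨k, rfl⟩ : ∃ k, j = k + 2 := ⟨j - 2, by omega⟩
  intro b Rt μ ν μt x
  have h1 : k + 2 - 1 = k + 1 := by omega
  have h2 : k + 2 - 2 = k := by omega
  simp only [Rt, b, μ, ν, μt, h1, h2]
  have e1 : chebT (k+2) w0 = 2 * w0 * chebT (k+1) w0 - chebT k w0 := rfl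
  have e2 : chebT (k+2) (w0 + w1*x)
      = 2 * (w0 + w1*x) * chebT (k+1) (w0 + w1*x) - chebT k (w0 + w1*x) := rfl
  rw [e1, e2]
  have hk := hb k
  have hk1 := hb (k+1)
  have hk2 := hb (k+2)
  rw [e1] at hk2
  field_simp
  ring
end

section
/- For w_0 > 1, w_1 > 0, and integers 1 ≤ j ≤ s−1, the internal stability polynomials R̃_j(x) = 1 + b_j(T_j(w_0 + w_1 x) − T_j(w_0)), with b_j = 1/(1 + T_j(w_0)), satisfy 0 ≤ R̃_j(x) < 1 for all x in the half-open interval [−(1+w_0)/w_1, 0). -/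
open Real

lemma chebT_cos : ∀ (n : ℕ) (θ : ℝ), chebT n (Real.cos θ) = Real.cos (n * θ)
  | 0, θ => by simp [chebT]
  | 1, θ => by simp [chebT]
  | (n+2), θ => by
    have h1 := chebT_cos (n+1) θ
    have h2 := chebT_cos n θ
    have hadd := Real.cos_add (((n:ℝ)+1) * θ) θ
    have hsub := Real.cos_sub (((n:ℝ)+1) * θ) θ
    simp only [chebT]
    push_cast at h1 h2 ⊢
    have e1 : ((n:ℝ)+1) * θ + θ = ((n:ℝ) + 2) * θ := by ring
    have e2 : ((n:ℝ)+1) * θ - θ = (n:ℝ) * θ := by ring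
    rw [e1] at hadd
    rw [e2] at hsub
    rw [h1, h2]
    linarith

lemma chebT_abs_le (u : ℝ) (hu : -1 ≤ u) (hu' : u ≤ 1) (n : ℕ) :
    -1 ≤ chebT n u ∧ chebT n u ≤ 1 := by
  have : u = Real.cos (Real.arccos u) := (Real.cos_arccos hu hu').symm
  rw [this, chebT_cos]
  exact ⟨Real.neg_one_le_cos _, Real.cos_le_one _⟩

lemma chebT_ge_one (x : ℝ) (hx : 1 ≤ x) :
    ∀ n : ℕ, 1 ≤ chebT n x ∧ chebT n x ≤ chebT (n+1) x
  | 0 => by simp [chebT]; linarith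
  | (n+1) => by
    obtain ⟨h1, h2⟩ := chebT_ge_one x hx n
    constructor
    · linarith
    · show chebT (n+1) x ≤ 2 * x * chebT (n+1) x - chebT n x
      nlinarith

lemma chebT_diff (a b : ℝ) (ha : 1 ≤ a) (hab : a ≤ b) :
    ∀ n : ℕ, 0 ≤ chebT n b - chebT n a ∧
      chebT n b - chebT n a ≤ chebT (n+1) b - chebT (n+1) a
  | 0 => by simp [chebT]; linarith
  | (n+1) => by
    obtain ⟨h1, h2⟩ := chebT_diff a b ha hab n
    have hb1 := (chebT_ge_one b (le_trans ha hab) (n+1)).1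
    have ha1 := (chebT_ge_one a ha (n+1)).1
    have hrecb : chebT (n+2) b = 2 * b * chebT (n+1) b - chebT n b := rfl
    have hreca : chebT (n+2) a = 2 * a * chebT (n+1) a - chebT n a := rfl
    constructor
    · linarith
    · have goal : chebT (n+2) b - chebT (n+2) a
          = 2 * a * (chebT (n+1) b - chebT (n+1) a)
            + 2 * (b - a) * chebT (n+1) b - (chebT n b - chebT n a) := by
        rw [hrecb, hreca]; ring
      show chebT (n+1) b - chebT (n+1) a ≤ chebT (n+1+1) b - chebT (n+1+1) a
      rw [goal]
      nlinarith [h2, h1, hb1, ha, hab]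

lemma chebT_strict (a b : ℝ) (ha : 1 ≤ a) (hab : a < b) (n : ℕ) (hn : 1 ≤ n) :
    chebT n a < chebT n b := by
  have key : ∀ m : ℕ, 1 ≤ m → b - a ≤ chebT m b - chebT m a := by
    intro m hm
    induction m, hm using Nat.le_induction with
    | base => simp [chebT]
    | succ k hk ih =>
      have := (chebT_diff a b ha hab.le k).2
      linarith
  have := key n hn
  linarith

lemma chebT_one (n : ℕ) : chebT n 1 = 1 := by
  have := chebT_cos n 0
  simpa using this

theorem stmt5 (s j : ℕ) (hj1 : 1 ≤ j) (hjs : j ≤ s - 1) (w0 w1 : ℝ)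
    (hw0 : 1 < w0) (hw1 : 0 < w1)
    (x : ℝ) (hx : x ∈ Set.Ico (-(1+w0)/w1) 0) :
    let b : ℝ := 1 / (1 + chebT j w0)
    let Rt : ℝ := 1 + b * (chebT j (w0 + w1 * x) - chebT j w0)
    0 ≤ Rt ∧ Rt < 1 := by
  intro b Rt
  obtain ⟨hx1, hx2⟩ := hx
  set u : ℝ := w0 + w1 * x with hu
  have hu1 : -1 ≤ u := by
    have : -(1+w0) ≤ w1 * x := by
      have := (div_le_iff₀ hw1).mp hx1
      linarith [this]
    linarith
  have hu2 : u < w0 := by nlinarith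
  -- T_j w0 > 1
  have hTw0 : 1 < chebT j w0 := by
    have := chebT_strict 1 w0 le_rfl hw0 j hj1
    rwa [chebT_one] at this
  have hden : 0 < 1 + chebT j w0 := by linarith
  have hb : b * (1 + chebT j w0) = 1 := by
    simp only [b]
    field_simp
  have hbpos : 0 < b := by positivity
  -- T_j u < T_j w0 and -1 ≤ T_j u
  have hlt : chebT j u < chebT j w0 := by
    rcases le_or_gt u 1 with h | h
    · have := (chebT_abs_le u hu1 h j).2
      linarith
    · exact chebT_strict u w0 h.le hu2 j hj1
  have hge : -1 ≤ chebT j u := by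
    rcases le_or_gt u 1 with h | h
    · exact (chebT_abs_le u hu1 h j).1
    · have := (chebT_ge_one u h.le j).1; linarith
  constructor
  · show 0 ≤ 1 + b * (chebT j u - chebT j w0)
    nlinarith [hb, hbpos, hge]
  · show 1 + b * (chebT j u - chebT j w0) < 1
    nlinarith [hbpos, hlt]
end

section
/- With b_j = 1/(1 + T_j(w_0)), w_0 > 1, w_1 > 0, and coefficients μ_j = 2 w_0 b_j / b_{j−1}, ν_j = −b_j / b_{j−2}, μ̃_j = 2 w_1 b_j / b_{j−1}, the sequence defined by c_0 = 0, c_1 = w_1 b_1, and c_j = μ_j c_{j−1} + ν_j c_{j−2} + μ̃_j(1 − b_{j−1}) for j ≥ 2, satisfies c_j = w_1 b_j T_j′(w_0) for all j ≥ 0. -/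
/-!
Writing `d_j = c_j / b_j = c_j (1 + T_j(w₀))` and using `(1 - b_j) / b_j = T_j(w₀)`, the recurrence
for `c` becomes `d_j = 2 w₀ d_{j-1} - d_{j-2} + 2 w₁ T_{j-1}(w₀)` with `d_0 = 0`, `d_1 = w₁`.
This is the recurrence obtained by differentiating `T_j = 2 u T_{j-1} - T_{j-2}`, so `d_j = w₁ T_j'(w₀)`.
The divisions are harmless since `T_j(w₀) ≥ 1` for `w₀ > 1`, so every `b_j` is nonzero.
-/

open Real

lemma chebT_add_two (n : ℕ) (x : ℝ) :
    chebT (n + 2) x = 2 * x * chebT (n + 1) x - chebT n x := rfl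

lemma one_le_chebT_and_le_succ {x : ℝ} (hx : 1 ≤ x) :
    ∀ n, 1 ≤ chebT n x ∧ chebT n x ≤ chebT (n + 1) x
  | 0 => ⟨le_rfl, hx⟩
  | n + 1 => by
    obtain ⟨h1, h2⟩ := one_le_chebT_and_le_succ hx n
    refine ⟨h1.trans h2, ?_⟩
    rw [chebT_add_two]
    nlinarith

lemma one_le_chebT {x : ℝ} (hx : 1 ≤ x) (n : ℕ) : 1 ≤ chebT n x :=
  (one_le_chebT_and_le_succ hx n).1

lemma differentiable_chebT : ∀ n, Differentiable ℝ (chebT n)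
  | 0 => differentiable_const (1 : ℝ)
  | 1 => differentiable_id
  | n + 2 => by
    have h : chebT (n + 2) = fun x => 2 * x * chebT (n + 1) x - chebT n x := rfl
    rw [h]
    exact ((differentiable_id.const_mul 2).mul (differentiable_chebT (n + 1))).sub
      (differentiable_chebT n)

lemma deriv_chebT_zero (x : ℝ) : deriv (chebT 0) x = 0 := deriv_const x 1

lemma deriv_chebT_one (x : ℝ) : deriv (chebT 1) x = 1 := deriv_id x

lemma deriv_chebT_add_two (n : ℕ) (x : ℝ) :
    deriv (chebT (n + 2)) x =
      2 * chebT (n + 1) x + 2 * x * deriv (chebT (n + 1)) x - deriv (chebT n) x := by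
  have h : chebT (n + 2) = fun x => 2 * x * chebT (n + 1) x - chebT n x := rfl
  have hd := (((hasDerivAt_id x).const_mul 2).mul
    (differentiable_chebT (n + 1) x).hasDerivAt).sub (differentiable_chebT n x).hasDerivAt
  rw [h]
  exact hd.deriv.trans (by simp only [id_eq]; ring)

lemma eq_mul_deriv_chebT {x w : ℝ} {d : ℕ → ℝ} (h0 : d 0 = 0) (h1 : d 1 = w)
    (hrec : ∀ n, d (n + 2) = 2 * x * d (n + 1) - d n + 2 * w * chebT (n + 1) x) :
    ∀ n, d n = w * deriv (chebT n) x :=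
  Nat.twoStepInduction (by rw [h0, deriv_chebT_zero, mul_zero])
    (by rw [h1, deriv_chebT_one, mul_one])
    (fun n ih0 ih1 => by rw [hrec, ih0, ih1, deriv_chebT_add_two]; ring)

lemma div_recurrence_of_recurrence {x w : ℝ} {t b c : ℕ → ℝ}
    (hb : ∀ k, b k = 1 / (1 + t k)) (ht : ∀ k, 1 + t k ≠ 0) (n : ℕ)
    (h : c (n + 2) = (2 * x * b (n + 2) / b (n + 1)) * c (n + 1)
      + (-(b (n + 2) / b n)) * c n + (2 * w * b (n + 2) / b (n + 1)) * (1 - b (n + 1))) :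
    c (n + 2) / b (n + 2) =
      2 * x * (c (n + 1) / b (n + 1)) - c n / b n + 2 * w * t (n + 1) := by
  have := ht n
  have := ht (n + 1)
  have := ht (n + 2)
  rw [h, hb n, hb (n + 1), hb (n + 2)]
  field_simp
  ring

theorem stmt6_general (w0 w1 : ℝ) (hw0 : 1 < w0) (c : ℕ → ℝ)
    (b : ℕ → ℝ) (hbdef : ∀ k, b k = 1 / (1 + chebT k w0))
    (hc0 : c 0 = 0) (hc1 : c 1 = w1 * b 1)
    (hcj : ∀ j : ℕ, 2 ≤ j →
      c j = (2 * w0 * b j / b (j-1)) * c (j-1)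
          + (-(b j / b (j-2))) * c (j-2)
          + (2 * w1 * b j / b (j-1)) * (1 - b (j-1))) :
    ∀ j : ℕ, c j = w1 * b j * deriv (chebT j) w0 := by
  have hden : ∀ k, 1 + chebT k w0 ≠ 0 := fun k => by
    linarith [one_le_chebT hw0.le k]
  have hb : ∀ k, b k ≠ 0 := fun k => by
    rw [hbdef k]; exact one_div_ne_zero (hden k)
  have hd := eq_mul_deriv_chebT (x := w0) (w := w1) (d := fun k => c k / b k)
    (by simp [hc0]) (by simp [hc1, hb 1])
    (fun n => div_recurrence_of_recurrence hbdef hden n (hcj (n + 2) (by omega)))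
  intro j
  rw [mul_right_comm, ← hd j, div_mul_cancel₀ _ (hb j)]

theorem stmt6 (w0 w1 : ℝ) (hw0 : 1 < w0) (hw1 : 0 < w1) (c : ℕ → ℝ)
    (b : ℕ → ℝ) (hbdef : ∀ k, b k = 1 / (1 + chebT k w0))
    (hc0 : c 0 = 0) (hc1 : c 1 = w1 * b 1)
    (hcj : ∀ j : ℕ, 2 ≤ j →
      c j = (2 * w0 * b j / b (j-1)) * c (j-1)
          + (-(b j / b (j-2))) * c (j-2)
          + (2 * w1 * b j / b (j-1)) * (1 - b (j-1))) :
    ∀ j : ℕ, c j = w1 * b j * deriv (chebT j) w0 :=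
  stmt6_general w0 w1 hw0 c b hbdef hc0 hc1 hcj
end

section
/- For w_0 > 1 and integers 1 ≤ j ≤ s−2, the abscissae c_j = w_1 b_j T_j′(w_0), with b_j = 1/(1 + T_j(w_0)) and w_1 > 0, form a strictly increasing sequence: c_{j−1} < c_j for all such j. Equivalently, the function j ↦ T_j′(w_0)/(1 + T_j(w_0)) is strictly increasing in j for w_0 > 1. -/
open Real

/-!
Write `w₀ = cosh t` with `t > 0`. Then `T_k(w₀) = cosh (k t)` and `T_k'(w₀) = k sinh (k t) / sinh t`,
and the half-angle identity `sinh x / (1 + cosh x) = tanh (x / 2)` turns the abscissa into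
`c_k = (w₁ / sinh t) · k tanh (k t / 2)`. This is strictly increasing in `k`, as a product of the
strictly increasing factor `k` with the nonnegative, increasing factor `tanh (k t / 2)`.
-/

open Polynomial Polynomial.Chebyshev

theorem chebT_eq_eval : ∀ n : ℕ, chebT n = fun x => (T ℝ n).eval x
  | 0 => by funext x; simp [chebT]
  | 1 => by funext x; simp [chebT]
  | n + 2 => by
    funext x
    simp [chebT, chebT_eq_eval n, chebT_eq_eval (n + 1), T_add_two ℝ n]

theorem chebT_cosh (n : ℕ) (t : ℝ) : chebT n (cosh t) = cosh (n * t) := by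
  simp [chebT_eq_eval]

theorem deriv_chebT_cosh (n : ℕ) {t : ℝ} (ht : t ≠ 0) :
    deriv (chebT n) (cosh t) = n * sinh (n * t) / sinh t := by
  have hU : (U ℝ (n - 1 : ℤ)).eval (cosh t) * sinh t = sinh (n * t) := by simp
  rw [chebT_eq_eval, Polynomial.deriv, T_derivative_eq_U, eq_div_iff (sinh_ne_zero.2 ht), ← hU]
  simp only [eval_mul, eval_natCast, Int.cast_natCast]
  ring

theorem Real.sinh_div_one_add_cosh (x : ℝ) : sinh x / (1 + cosh x) = tanh (x / 2) := by
  obtain ⟨y, rfl⟩ : ∃ y, x = 2 * y := ⟨x / 2, by ring⟩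
  rw [sinh_two_mul, cosh_two_mul, mul_div_cancel_left₀ _ two_ne_zero, tanh_eq_sinh_div_cosh,
    div_eq_div_iff (by positivity) (cosh_pos y).ne']
  linear_combination sinh y * cosh_sq y

theorem deriv_chebT_div_one_add_chebT_cosh (n : ℕ) {t : ℝ} (ht : t ≠ 0) :
    deriv (chebT n) (cosh t) / (1 + chebT n (cosh t)) = n * tanh (n * t / 2) / sinh t := by
  rw [deriv_chebT_cosh n ht, chebT_cosh, ← sinh_div_one_add_cosh]
  ring

theorem Real.strictMono_tanh : StrictMono tanh := fun x y hxy => by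
  by_contra! h
  have := (artanh_le_artanh_iff ⟨neg_one_lt_tanh y, tanh_lt_one y⟩
    ⟨neg_one_lt_tanh x, tanh_lt_one x⟩).2 h
  rw [artanh_tanh, artanh_tanh] at this
  linarith

theorem strictMonoOn_mul_tanh_mul {a : ℝ} (ha : 0 < a) :
    StrictMonoOn (fun x => x * tanh (x * a)) (Set.Ici 0) := fun x hx y _ hxy => by
  have hy : 0 < y := hxy.trans_le' hx
  have hty : 0 < tanh (y * a) := tanh_zero ▸ strictMono_tanh (by positivity)
  calc x * tanh (x * a) ≤ x * tanh (y * a) := by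
        gcongr
        exact strictMono_tanh.monotone (by gcongr)
    _ < y * tanh (y * a) := by gcongr

theorem stmt7_general (j : ℕ) (hj1 : 1 ≤ j) (w0 w1 : ℝ)
    (hw0 : 1 < w0) (hw1 : 0 < w1) :
    let c : ℕ → ℝ := fun k => w1 * (1 / (1 + chebT k w0)) * deriv (chebT k) w0
    c (j-1) < c j := by
  intro c
  obtain ⟨t, ht, rfl⟩ : ∃ t, 0 < t ∧ cosh t = w0 :=
    ⟨arcosh w0, arcosh_pos hw0, cosh_arcosh hw0.le⟩
  have hc (k : ℕ) : c k = w1 / sinh t * (k * tanh (k * (t / 2))) := by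
    simp only [c]
    rw [mul_assoc, one_div_mul_eq_div, deriv_chebT_div_one_add_chebT_cosh k ht.ne',
      mul_div_assoc (k : ℝ) t 2]
    ring
  rw [hc, hc]
  refine mul_lt_mul_of_pos_left ?_ (div_pos hw1 (sinh_pos_iff.2 ht))
  exact strictMonoOn_mul_tanh_mul (half_pos ht) (Set.mem_Ici.2 (Nat.cast_nonneg _))
    (Set.mem_Ici.2 (Nat.cast_nonneg _)) (Nat.cast_lt.2 (Nat.sub_lt hj1 one_pos))

theorem stmt7 (s j : ℕ) (hj1 : 1 ≤ j) (hjs : j ≤ s - 2) (w0 w1 : ℝ)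
    (hw0 : 1 < w0) (hw1 : 0 < w1) :
    let c : ℕ → ℝ := fun k => w1 * (1 / (1 + chebT k w0)) * deriv (chebT k) w0
    c (j-1) < c j :=
  stmt7_general j hj1 w0 w1 hw0 hw1
end

section
/- For w_0 = cosh(t) with t > 0 and positive integers m < n, one has m·sinh(m t)·(1 + cosh(n t)) < n·sinh(n t)·(1 + cosh(m t)). -/
open Real

theorem stmt8 (t : ℝ) (ht : 0 < t) (m n : ℕ) (hm : 0 < m) (hmn : m < n) :
    (m : ℝ) * Real.sinh (m * t) * (1 + Real.cosh (n * t))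
      < (n : ℝ) * Real.sinh (n * t) * (1 + Real.cosh (m * t)) := by
  have hm' : (0:ℝ) < m := by exact_mod_cast hm
  have hmn' : (m:ℝ) < n := by exact_mod_cast hmn
  set a := (m:ℝ) * t / 2 with ha_def
  set b := (n:ℝ) * t / 2 with hb_def
  have ha : 0 < a := by positivity
  have hab : a < b := by
    have : (m:ℝ) * t < n * t := by nlinarith
    simp only [ha_def, hb_def]; linarith
  have h1 : (m:ℝ) * t = 2 * a := by rw [ha_def]; ring
  have h2 : (n:ℝ) * t = 2 * b := by rw [hb_def]; ring
  rw [h1, h2, Real.sinh_two_mul, Real.cosh_two_mul, Real.sinh_two_mul, Real.cosh_two_mul]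
  have hca : 0 < Real.cosh a := Real.cosh_pos _
  have hcb : 0 < Real.cosh b := Real.cosh_pos _
  have hsa : 0 < Real.sinh a := Real.sinh_pos_iff.2 ha
  have hsb : 0 < Real.sinh b := Real.sinh_pos_iff.2 (lt_trans ha hab)
  have hneg : Real.sinh (a - b) < 0 := by
    rw [show a - b = -(b - a) by ring, Real.sinh_neg]
    linarith [Real.sinh_pos_iff.2 (by linarith : (0:ℝ) < b - a)]
  have hsub : Real.sinh a * Real.cosh b - Real.cosh a * Real.sinh b < 0 := by
    rw [← Real.sinh_sub]; exact hneg
  have key : (m:ℝ) * Real.sinh a * Real.cosh b < (n:ℝ) * Real.sinh b * Real.cosh a := by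
    nlinarith [mul_pos hsb hca]
  have ga : (1:ℝ) + (Real.cosh a ^ 2 + Real.sinh a ^ 2) = 2 * Real.cosh a ^ 2 := by
    have := Real.cosh_sq_sub_sinh_sq a; linarith
  have gb : (1:ℝ) + (Real.cosh b ^ 2 + Real.sinh b ^ 2) = 2 * Real.cosh b ^ 2 := by
    have := Real.cosh_sq_sub_sinh_sq b; linarith
  rw [ga, gb]
  nlinarith [mul_lt_mul_of_pos_right key (mul_pos hca hcb)]
end

section
/- For s ≥ 3, w_0 > 1, and w_1 = (1 + T_{s−1}(w_0))/T_{s−1}′(w_0), the stability polynomial R_s defined by R_s′(x) = b_{s−1}(1 + T_{s−1}(w_0 + w_1 x)) with R_s(0) = 1 (b_{s−1} = 1/(1 + T_{s−1}(w_0))) is monotonically non-decreasing on the interval [−ρ_s, 0], where ρ_s = (1 + w_0)/w_1. -/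
open Real

open Polynomial Polynomial.Chebyshev

lemma chebT_eq_eval_T : ∀ (n : ℕ) (x : ℝ), chebT n x = (T ℝ n).eval x
  | 0, x => by simp [chebT]
  | 1, x => by simp [chebT]
  | (n+2), x => by
    rw [chebT, chebT_eq_eval_T (n+1), chebT_eq_eval_T n]
    push_cast
    simp [T_add_two]

lemma neg_one_le_chebT (n : ℕ) {x : ℝ} (hx : -1 ≤ x) : -1 ≤ chebT n x := by
  rw [chebT_eq_eval_T]
  rcases le_total x 1 with h | h
  · exact (eval_T_real_mem_Icc n ⟨hx, h⟩).1
  · linarith [one_le_eval_T_real n h]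

-- No sign condition on `w` is needed: for `w < 0` the interval is empty or `{0}`, and `c / 0 = 0`.
lemma neg_le_mul_of_mem_Icc_neg_div {c w x : ℝ} (hc : 0 ≤ c)
    (hx : x ∈ Set.Icc (-(c / w)) 0) : -c ≤ w * x := by
  obtain ⟨hlo, hhi⟩ := hx
  rcases lt_trichotomy w 0 with hw | rfl | hw
  · have : c / w ≤ 0 := div_nonpos_of_nonneg_of_nonpos hc hw.le
    nlinarith
  · simpa using hc
  · have := mul_le_mul_of_nonneg_left hlo hw.le
    rwa [mul_neg, mul_div_cancel₀ c hw.ne'] at this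

theorem stmt12_general (s : ℕ) (w0 : ℝ) (hw0 : 1 < w0)
    (R : ℝ → ℝ) (hdiff : Differentiable ℝ R)
    (hR' : ∀ x, deriv R x
      = (1 / (1 + chebT (s-1) w0)) *
        (1 + chebT (s-1) (w0 + ((1 + chebT (s-1) w0) / deriv (chebT (s-1)) w0) * x))) :
    MonotoneOn R
      (Set.Icc (-((1 + w0) / ((1 + chebT (s-1) w0) / deriv (chebT (s-1)) w0))) 0) := by
  set w1 := (1 + chebT (s-1) w0) / deriv (chebT (s-1)) w0
  refine monotoneOn_of_deriv_nonneg (convex_Icc _ _) hdiff.continuous.continuousOn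
    hdiff.differentiableOn fun x hx => ?_
  -- the affine change of variables maps `[-ρ_s, 0]` into `[-1, ∞)`, where `1 + T_{s-1} ≥ 0`
  have hu : -(1 + w0) ≤ w1 * x := neg_le_mul_of_mem_Icc_neg_div (by linarith) (interior_subset hx)
  rw [hR' x]
  refine mul_nonneg (one_div_nonneg.mpr ?_) ?_
  · linarith [neg_one_le_chebT (s-1) (by linarith : -1 ≤ w0)]
  · linarith [neg_one_le_chebT (s-1) (by linarith : -1 ≤ w0 + w1 * x)]

theorem stmt12 (s : ℕ) (hs : 3 ≤ s) (w0 : ℝ) (hw0 : 1 < w0)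
    (R : ℝ → ℝ) (hdiff : Differentiable ℝ R) (hR0 : R 0 = 1)
    (hR' : ∀ x, deriv R x
      = (1 / (1 + chebT (s-1) w0)) *
        (1 + chebT (s-1) (w0 + ((1 + chebT (s-1) w0) / deriv (chebT (s-1)) w0) * x))) :
    MonotoneOn R
      (Set.Icc (-((1 + w0) / ((1 + chebT (s-1) w0) / deriv (chebT (s-1)) w0))) 0) :=
  stmt12_general s w0 hw0 R hdiff hR'
end
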